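/- Let {P(t)} be an i.i.d. sequence of m×m doubly stochastic random matrices and define v(t+1) = P(t)v(t) − (𝟙/m)·(𝟙ᵀv(t)) starting from a vector v(0) orthogonal to 𝟙. If each P(t) is symmetric, then E[‖v(t+1)‖²] ≤ λ₂(E[P(t)²])·E[‖v(t)‖²], and hence E[‖v(t)‖²] ≤ ‖v(0)‖²·λ₂(E[P(t)²])^t, where λ₂ denotes the second-largest eigenvalue. -/

import Mathlib

/-!
Because the columns of `P(t)` sum to one, `∑ᵢ v(t)ᵢ = 0` is preserved, so the correction term
vanishes and `v(t+1) = P(t) v(t)`; nonnegativity and unit row sums make `P(t)` a contraction in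
the sup norm, so `v(t)` stays bounded and every moment below is finite. Symmetry turns
`‖P v‖²` into the quadratic form `vᵀ P² v`, and independence of `P(t)` from `v(t)` replaces `P(t)²`
by its mean `M` in expectation, where the bound by `λ₂` on `𝟙ᗮ` applies. Iterating gives the
geometric decay.
-/

open MeasureTheory ProbabilityTheory

instance {m : ℕ} : MeasurableSpace (Matrix (Fin m) (Fin m) ℝ) :=
  (MeasurableSpace.pi : MeasurableSpace ((Fin m) → (Fin m) → ℝ))

open Matrix

namespace Matrix

variable {n : Type*} [Fintype n]

theorem dotProduct_mulVec_eq_sum_sum (B : Matrix n n ℝ) (w : n → ℝ) :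
    w ⬝ᵥ (B *ᵥ w) = ∑ i, ∑ j, B i j * (w i * w j) := by
  simp only [dotProduct, mulVec, Finset.mul_sum]
  grind

theorem dotProduct_mul_self_mulVec_of_isSymm {A : Matrix n n ℝ} (hA : A.IsSymm) (w : n → ℝ) :
    w ⬝ᵥ ((A * A) *ᵥ w) = (A *ᵥ w) ⬝ᵥ (A *ᵥ w) := by
  rw [← mulVec_mulVec, dotProduct_mulVec, ← mulVec_transpose, hA.eq]

variable [DecidableEq n]

theorem norm_mulVec_le_of_mem_doublyStochastic {A : Matrix n n ℝ}
    (hA : A ∈ doublyStochastic ℝ n) (w : n → ℝ) : ‖A *ᵥ w‖ ≤ ‖w‖ := by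
  refine pi_norm_le_iff_of_nonneg (norm_nonneg w) |>.2 fun i => ?_
  calc ‖(A *ᵥ w) i‖ ≤ ∑ j, ‖A i j * w j‖ := norm_sum_le _ _
    _ ≤ ∑ j, A i j * ‖w‖ := Finset.sum_le_sum fun j _ => by
      rw [norm_mul, Real.norm_of_nonneg (nonneg_of_mem_doublyStochastic hA)]
      exact mul_le_mul_of_nonneg_left (norm_le_pi_norm w j) (nonneg_of_mem_doublyStochastic hA)
    _ = ‖w‖ := by rw [← Finset.sum_mul, sum_row_of_mem_doublyStochastic hA, one_mul]

theorem norm_apply_le_one_of_mem_doublyStochastic {A : Matrix n n ℝ}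
    (hA : A ∈ doublyStochastic ℝ n) (i j : n) : ‖A i j‖ ≤ 1 := by
  rw [Real.norm_of_nonneg (nonneg_of_mem_doublyStochastic hA)]
  exact le_one_of_mem_doublyStochastic hA

end Matrix

theorem measurable_mul_self_matrix (m : ℕ) :
    Measurable fun A : Matrix (Fin m) (Fin m) ℝ => A * A :=
  measurable_pi_lambda _ fun i => measurable_pi_lambda _ fun j => by
    simp only [mul_apply]; fun_prop

section

variable {Ω ι κ : Type*} [MeasurableSpace Ω] {μ : Measure Ω} [Fintype ι] [Fintype κ] {m : ℕ}

theorem integrable_apply_mul_apply_of_ae_norm_le [IsFiniteMeasure μ] {w : Ω → ι → ℝ}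
    (hw : Measurable w) {C : ℝ} (hC : ∀ᵐ ω ∂μ, ‖w ω‖ ≤ C) (i j : ι) :
    Integrable (fun ω => w ω i * w ω j) μ := by
  refine .of_bound (by fun_prop) (C * C) ?_
  filter_upwards [hC] with ω hω
  rw [norm_mul]
  exact mul_le_mul ((norm_le_pi_norm _ i).trans hω) ((norm_le_pi_norm _ j).trans hω)
    (norm_nonneg _) ((norm_nonneg _).trans hω)

theorem integral_sum_sum {f : ι → κ → Ω → ℝ} (hf : ∀ i j, Integrable (f i j) μ) :
    ∫ ω, ∑ i, ∑ j, f i j ω ∂μ = ∑ i, ∑ j, ∫ ω, f i j ω ∂μ := by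
  rw [integral_finsetSum _ fun i _ => integrable_finsetSum _ fun j _ => hf i j]
  exact Finset.sum_congr rfl fun i _ => integral_finsetSum _ fun j _ => hf i j

theorem integral_dotProduct_mulVec_of_indepFun {Q : Ω → Matrix (Fin m) (Fin m) ℝ}
    {w : Ω → Fin m → ℝ} (hind : IndepFun Q w μ)
    (hQ : ∀ i j, Integrable (fun ω => Q ω i j) μ)
    (hw : ∀ i j, Integrable (fun ω => w ω i * w ω j) μ)
    {M : Matrix (Fin m) (Fin m) ℝ} (hM : ∀ i j, M i j = ∫ ω, Q ω i j ∂μ) :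
    ∫ ω, w ω ⬝ᵥ (Q ω *ᵥ w ω) ∂μ = ∫ ω, w ω ⬝ᵥ (M *ᵥ w ω) ∂μ := by
  have hind' (i j : Fin m) : IndepFun (fun ω => Q ω i j) (fun ω => w ω i * w ω j) μ :=
    hind.comp (φ := fun A : Matrix (Fin m) (Fin m) ℝ => A i j)
      (ψ := fun x : Fin m → ℝ => x i * x j) (by fun_prop) (by fun_prop)
  have hint (i j : Fin m) : Integrable (fun ω => Q ω i j * (w ω i * w ω j)) μ :=
    (hind' i j).integrable_mul (hQ i j) (hw i j)
  simp only [dotProduct_mulVec_eq_sum_sum]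
  rw [integral_sum_sum hint, integral_sum_sum fun i j => (hw i j).const_mul (M i j)]
  refine Finset.sum_congr rfl fun i _ => Finset.sum_congr rfl fun j _ => ?_
  rw [integral_const_mul, hM]
  exact (hind' i j).integral_fun_mul_eq_mul_integral (hQ i j).1 (hw i j).1

theorem integral_sum_sq_mulVec_le [IsProbabilityMeasure μ] {A : Ω → Matrix (Fin m) (Fin m) ℝ}
    {w : Ω → Fin m → ℝ} (hA : Measurable A) (hw : Measurable w) (hind : IndepFun A w μ)
    (hsymm : ∀ᵐ ω ∂μ, (A ω).IsSymm) (hds : ∀ᵐ ω ∂μ, A ω ∈ doublyStochastic ℝ (Fin m))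
    {C : ℝ} (hC : ∀ᵐ ω ∂μ, ‖w ω‖ ≤ C) (hsum : ∀ᵐ ω ∂μ, ∑ i, w ω i = 0)
    {M : Matrix (Fin m) (Fin m) ℝ} (hM : ∀ i j, M i j = ∫ ω, (A ω * A ω) i j ∂μ)
    {lam : ℝ} (hlam : ∀ x : Fin m → ℝ, ∑ i, x i = 0 → x ⬝ᵥ (M *ᵥ x) ≤ lam * ∑ i, x i ^ 2) :
    ∫ ω, ∑ i, (A ω *ᵥ w ω) i ^ 2 ∂μ ≤ lam * ∫ ω, ∑ i, w ω i ^ 2 ∂μ := by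
  have hww := integrable_apply_mul_apply_of_ae_norm_le hw hC
  have hAA (i j : Fin m) : Integrable (fun ω => (A ω * A ω) i j) μ := by
    refine .of_bound (by simp only [mul_apply]; fun_prop) 1 ?_
    filter_upwards [hds] with ω h
    exact norm_apply_le_one_of_mem_doublyStochastic (mul_mem h h) i j
  have hsq (x : Fin m → ℝ) : ∑ i, x i ^ 2 = x ⬝ᵥ x := by simp [dotProduct, sq]
  calc ∫ ω, ∑ i, (A ω *ᵥ w ω) i ^ 2 ∂μ = ∫ ω, w ω ⬝ᵥ ((A ω * A ω) *ᵥ w ω) ∂μ := by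
        refine integral_congr_ae ?_
        filter_upwards [hsymm] with ω h
        rw [hsq, dotProduct_mul_self_mulVec_of_isSymm h]
    _ = ∫ ω, w ω ⬝ᵥ (M *ᵥ w ω) ∂μ :=
        integral_dotProduct_mulVec_of_indepFun
          (hind.comp (measurable_mul_self_matrix m) measurable_id) hAA hww hM
    _ ≤ ∫ ω, lam * ∑ i, w ω i ^ 2 ∂μ := by
        refine integral_mono_ae ?_ ?_ (hsum.mono fun ω h => hlam _ h)
        · simp only [dotProduct_mulVec_eq_sum_sum]
          exact integrable_finsetSum _ fun i _ => integrable_finsetSum _ fun j _ =>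
            (hww i j).const_mul _
        · exact (integrable_finsetSum _ fun i _ => by simpa only [sq] using hww i i).const_mul lam
    _ = lam * ∫ ω, ∑ i, w ω i ^ 2 ∂μ := integral_const_mul _ _

theorem ae_sum_eq_zero_and_norm_le {P : ℕ → Ω → Matrix (Fin m) (Fin m) ℝ}
    {v : ℕ → Ω → Fin m → ℝ} {v0 : Fin m → ℝ}
    (hds : ∀ t, ∀ᵐ ω ∂μ, P t ω ∈ doublyStochastic ℝ (Fin m))
    (hv0 : ∀ ω, v 0 ω = v0) (horth : ∑ i, v0 i = 0)
    (hstep : ∀ t ω, ∑ i, v t ω i = 0 → v (t + 1) ω = P t ω *ᵥ v t ω) (t : ℕ) :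
    ∀ᵐ ω ∂μ, ∑ i, v t ω i = 0 ∧ ‖v t ω‖ ≤ ‖v0‖ := by
  induction t with
  | zero => exact .of_forall fun ω => by simp only [hv0, horth, le_refl, and_self]
  | succ t ih =>
    filter_upwards [ih, hds t] with ω ⟨hsum, hnorm⟩ hP
    rw [hstep t ω hsum, sum_mulVec_of_mem_doublyStochastic hP]
    exact ⟨hsum, (norm_mulVec_le_of_mem_doublyStochastic hP _).trans hnorm⟩

end

theorem consensus_contraction_stochastic_general
    {m : ℕ}
    {Ω : Type*} [MeasurableSpace Ω] (μ : Measure Ω) [IsProbabilityMeasure μ]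
    (P : ℕ → Ω → Matrix (Fin m) (Fin m) ℝ)
    (hPmeas : ∀ t, Measurable (P t))
    (hsymm : ∀ t, ∀ᵐ ω ∂μ, (P t ω).IsSymm)
    (hnonneg : ∀ t, ∀ᵐ ω ∂μ, ∀ i j, 0 ≤ P t ω i j)
    (hrow : ∀ t, ∀ᵐ ω ∂μ, ∀ i, ∑ j, P t ω i j = 1)
    (hcol : ∀ t, ∀ᵐ ω ∂μ, ∀ j, ∑ i, P t ω i j = 1)
    (hident : ∀ t, Measure.map (P t) μ = Measure.map (P 0) μ)
    (v : ℕ → Ω → (Fin m → ℝ)) (v0 : Fin m → ℝ)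
    (hv0 : ∀ ω, v 0 ω = v0) (horth : ∑ i, v0 i = 0)
    (hvmeas : ∀ t, Measurable (v t))
    (hindep : ∀ t, IndepFun (P t) (v t) μ)
    (hrec : ∀ t ω, v (t + 1) ω =
      (P t ω).mulVec (v t ω) - (1 / (m : ℝ)) • (fun _ => ∑ i, v t ω i))
    (M : Matrix (Fin m) (Fin m) ℝ)
    (hM : ∀ i j, M i j = ∫ ω, ((P 0 ω) * (P 0 ω)) i j ∂μ)
    (lam2 : ℝ) (hlam2nonneg : 0 ≤ lam2)
    (hlam2 : ∀ w : Fin m → ℝ, ∑ i, w i = 0 →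
      dotProduct w (M.mulVec w) ≤ lam2 * ∑ i, (w i) ^ 2) :
    (∀ t, (∫ ω, ∑ i, (v (t + 1) ω i) ^ 2 ∂μ) ≤
        lam2 * ∫ ω, ∑ i, (v t ω i) ^ 2 ∂μ) ∧
    (∀ t, (∫ ω, ∑ i, (v t ω i) ^ 2 ∂μ) ≤ (∑ i, (v0 i) ^ 2) * lam2 ^ t) := by
  have hds (t : ℕ) : ∀ᵐ ω ∂μ, P t ω ∈ doublyStochastic ℝ (Fin m) := by
    filter_upwards [hnonneg t, hrow t, hcol t] with ω h₀ h₁ h₂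
    exact mem_doublyStochastic_iff_sum.2 ⟨h₀, h₁, h₂⟩
  have hstep (t : ℕ) (ω : Ω) (h : ∑ i, v t ω i = 0) : v (t + 1) ω = P t ω *ᵥ v t ω := by
    rw [hrec, h, ← Pi.zero_def, smul_zero, sub_zero]
  have hinv := ae_sum_eq_zero_and_norm_le hds hv0 horth hstep
  have hMt (t : ℕ) (i j : Fin m) : M i j = ∫ ω, (P t ω * P t ω) i j ∂μ := by
    have hid : IdentDistrib (P t) (P 0) μ μ :=
      ⟨(hPmeas t).aemeasurable, (hPmeas 0).aemeasurable, hident t⟩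
    rw [hM]
    exact (hid.comp (u := fun A => (A * A) i j)
      (by simp only [mul_apply]; fun_prop)).integral_eq.symm
  have hcontract (t : ℕ) :
      ∫ ω, ∑ i, v (t + 1) ω i ^ 2 ∂μ ≤ lam2 * ∫ ω, ∑ i, v t ω i ^ 2 ∂μ := by
    rw [integral_congr_ae ((hinv t).mono fun ω h => by rw [hstep t ω h.1])]
    exact integral_sum_sq_mulVec_le (hPmeas t) (hvmeas t) (hindep t) (hsymm t) (hds t)
      ((hinv t).mono fun _ h => h.2) ((hinv t).mono fun _ h => h.1) (hMt t) hlam2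
  refine ⟨hcontract, fun t => ?_⟩
  simpa [hv0, mul_comm] using
    le_geom (u := fun t => ∫ ω, ∑ i, v t ω i ^ 2 ∂μ) hlam2nonneg t fun k _ => hcontract k

theorem consensus_contraction_stochastic
    {m : ℕ} (hm : 1 ≤ m)
    {Ω : Type*} [MeasurableSpace Ω] (μ : Measure Ω) [IsProbabilityMeasure μ]
    (P : ℕ → Ω → Matrix (Fin m) (Fin m) ℝ)
    (hPmeas : ∀ t, Measurable (P t))
    (hsymm : ∀ t, ∀ᵐ ω ∂μ, (P t ω).IsSymm)
    (hnonneg : ∀ t, ∀ᵐ ω ∂μ, ∀ i j, 0 ≤ P t ω i j)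
    (hrow : ∀ t, ∀ᵐ ω ∂μ, ∀ i, ∑ j, P t ω i j = 1)
    (hcol : ∀ t, ∀ᵐ ω ∂μ, ∀ j, ∑ i, P t ω i j = 1)
    (hident : ∀ t, Measure.map (P t) μ = Measure.map (P 0) μ)
    (v : ℕ → Ω → (Fin m → ℝ)) (v0 : Fin m → ℝ)
    (hv0 : ∀ ω, v 0 ω = v0) (horth : ∑ i, v0 i = 0)
    (hvmeas : ∀ t, Measurable (v t))
    (hindep : ∀ t, IndepFun (P t) (v t) μ)
    (hrec : ∀ t ω, v (t + 1) ω =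
      (P t ω).mulVec (v t ω) - (1 / (m : ℝ)) • (fun _ => ∑ i, v t ω i))
    (M : Matrix (Fin m) (Fin m) ℝ)
    (hM : ∀ i j, M i j = ∫ ω, ((P 0 ω) * (P 0 ω)) i j ∂μ)
    (lam2 : ℝ) (hlam2nonneg : 0 ≤ lam2)
    (hlam2 : ∀ w : Fin m → ℝ, ∑ i, w i = 0 →
      dotProduct w (M.mulVec w) ≤ lam2 * ∑ i, (w i) ^ 2) :
    (∀ t, (∫ ω, ∑ i, (v (t + 1) ω i) ^ 2 ∂μ) ≤
        lam2 * ∫ ω, ∑ i, (v t ω i) ^ 2 ∂μ) ∧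
    (∀ t, (∫ ω, ∑ i, (v t ω i) ^ 2 ∂μ) ≤ (∑ i, (v0 i) ^ 2) * lam2 ^ t) :=
  consensus_contraction_stochastic_general μ P hPmeas hsymm hnonneg hrow hcol hident v v0 hv0 horth
    hvmeas hindep hrec M hM lam2 hlam2nonneg hlam2
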